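/- arXiv:2512.02208 — 3 statements merged into one kernel-verified Lean document; each statement's English description precedes it below -/
import Mathlib

section
/- Let ⟨X_n, π_{mn}⟩ be a projective system of topological spaces and ⟨Φ_n, η_{nm}⟩ a compatible direct system of groups acting on the X_n, where each X_n carries its Borel σ-algebra and, for every φ ∈ Φ_n, the map x ↦ φ • x on X_n is a measurable bijection with measurable inverse. Equip X_ℕ with the σ-algebra generated by the coordinate maps p_n : X_ℕ → X_n. Let (μ_n)_{n≥1} be probability measures, μ_n on X_n, such that each μ_n is Φ_n-invariant, i.e. μ_n({x : φ • x ∈ A}) = μ_n(A) for every φ ∈ Φ_n and Borel A ⊆ X_n. Let μ be a probability measure on X_ℕ whose pushforward under p_n is μ_n for every n, and assume μ is the unique such measure (any probability measure ν on X_ℕ with pushforward μ_n under every p_n equals μ). Then μ is invariant under the direct limit group action: for every k ≥ 1 and φ ∈ Φ_k, the map x ↦ act(φ, x) from X_ℕ to X_ℕ is measurable and μ({x ∈ X_ℕ : act(φ, x) ∈ A}) = μ(A) for every measurable A ⊆ X_ℕ. -/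
open MeasureTheory

/-- The action of an element `φ ∈ Φ_k` of the direct system of groups on an element
`x` of the product `Π n, X n`: `act(φ, x)_m = π_{km}(φ • x_k)` for `m ≤ k` and
`act(φ, x)_m = (η_{km} φ) • x_m` for `m > k`. -/
def limAct (X : ℕ → Type*) (Φ : ℕ → Type*) [∀ n, Group (Φ n)]
    [∀ n, MulAction (Φ n) (X n)]
    (π : ∀ n m : ℕ, n ≤ m → X m → X n)
    (η : ∀ n m : ℕ, n ≤ m → Φ n →* Φ m)
    (k : ℕ) (φ : Φ k) (x : ∀ n, X n) (m : ℕ) : X m :=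
  if h : m ≤ k then π m k h (φ • x k) else (η k m (not_le.mp h).le φ) • x m

/-- The projective limit set `X_ℕ = {x ∈ Π n, X n : π_{mn}(x_m) = x_n for n ≤ m}`,
carrying (as a subtype of the product) the σ-algebra generated by the coordinate maps. -/
abbrev ProjLim (X : ℕ → Type*) (π : ∀ n m : ℕ, n ≤ m → X m → X n) : Type _ :=
  {x : ∀ n, X n // ∀ (n m : ℕ) (h : n ≤ m), π n m h (x m) = x n}

/-- if the measures `μ_n` are `Φ_n`-invariant and `μ` is the unique
probability measure on `X_ℕ` projecting to the `μ_n`, then `μ` is invariant under the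
direct limit group action: for every `k` and `φ ∈ Φ_k`, the induced map
`x ↦ act(φ, x)` on `X_ℕ` is measurable and preserves `μ`. -/
theorem projLim_measure_invariant
    (X : ℕ → Type*) [∀ n, TopologicalSpace (X n)]
    [∀ n, MeasurableSpace (X n)] [∀ n, BorelSpace (X n)]
    (π : ∀ n m : ℕ, n ≤ m → X m → X n)
    (hπcont : ∀ (n m : ℕ) (h : n ≤ m), Continuous (π n m h))
    (hπid : ∀ (n : ℕ) (x : X n), π n n (le_refl n) x = x)
    (hπcomp : ∀ (n m k : ℕ) (hnm : n ≤ m) (hmk : m ≤ k) (x : X k),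
      π n m hnm (π m k hmk x) = π n k (hnm.trans hmk) x)
    (Φ : ℕ → Type*) [∀ n, Group (Φ n)] [∀ n, MulAction (Φ n) (X n)]
    (hActMeas : ∀ (n : ℕ) (φ : Φ n), Measurable fun x : X n => φ • x)
    (η : ∀ n m : ℕ, n ≤ m → Φ n →* Φ m)
    (hηid : ∀ (n : ℕ) (φ : Φ n), η n n (le_refl n) φ = φ)
    (hηcomp : ∀ (n m k : ℕ) (hnm : n ≤ m) (hmk : m ≤ k) (φ : Φ n),
      η m k hmk (η n m hnm φ) = η n k (hnm.trans hmk) φ)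
    (hcompat : ∀ (n m : ℕ) (h : n ≤ m) (φ : Φ n) (x : X m),
      π n m h ((η n m h φ) • x) = φ • π n m h x)
    (μn : ∀ n, Measure (X n)) [∀ n, IsProbabilityMeasure (μn n)]
    (hinv : ∀ (n : ℕ) (φ : Φ n) (A : Set (X n)), MeasurableSet A →
      μn n ((fun x => φ • x) ⁻¹' A) = μn n A)
    (μ : Measure (ProjLim X π)) [IsProbabilityMeasure μ]
    (hproj : ∀ n, μ.map (fun x : ProjLim X π => x.1 n) = μn n)
    (huniq : ∀ ν : Measure (ProjLim X π), IsProbabilityMeasure ν →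
      (∀ n, ν.map (fun x : ProjLim X π => x.1 n) = μn n) → ν = μ) :
    ∀ (k : ℕ) (φ : Φ k), ∃ F : ProjLim X π → ProjLim X π,
      (∀ x : ProjLim X π, (F x).1 = limAct X Φ π η k φ x.1) ∧
      Measurable F ∧
      ∀ A : Set (ProjLim X π), MeasurableSet A → μ (F ⁻¹' A) = μ A := by

  intro k φ
  have hπmeas : ∀ (n m : ℕ) (h : n ≤ m), Measurable (π n m h) :=
    fun n m h => (hπcont n m h).measurable
  have hcoord : ∀ n, Measurable fun x : ProjLim X π => x.1 n :=
    fun n => (measurable_pi_apply n).comp measurable_subtype_coe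
  have hmemb : ∀ x : ProjLim X π, ∀ (n m : ℕ) (h : n ≤ m),
      π n m h (limAct X Φ π η k φ x.1 m) = limAct X Φ π η k φ x.1 n := by
    intro x n m hnm
    unfold limAct
    by_cases hm : m ≤ k
    · rw [dif_pos hm, dif_pos (hnm.trans hm), hπcomp]
    · rw [dif_neg hm]
      have hkm : k ≤ m := (not_le.mp hm).le
      by_cases hn : n ≤ k
      · rw [dif_pos hn]
        rw [← hπcomp n k m hn hkm, hcompat, x.2 k m hkm]
      · rw [dif_neg hn]
        have hkn : k ≤ n := (not_le.mp hn).le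
        rw [← hηcomp k n m hkn hnm, hcompat, x.2 n m hnm]
  set F : ProjLim X π → ProjLim X π := fun x => ⟨limAct X Φ π η k φ x.1, hmemb x⟩ with hF
  have hFmeas : Measurable F := by
    apply Measurable.subtype_mk
    apply measurable_pi_lambda
    intro m
    unfold limAct
    by_cases hm : m ≤ k
    · simp only [dif_pos hm]
      exact (hπmeas m k hm).comp ((hActMeas k φ).comp (hcoord k))
    · simp only [dif_neg hm]
      exact (hActMeas m _).comp (hcoord m)
  have hmapinv : ∀ (n : ℕ) (ψ : Φ n), (μn n).map (fun x => ψ • x) = μn n := by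
    intro n ψ
    ext A hA
    rw [Measure.map_apply (hActMeas n ψ) hA, hinv n ψ A hA]
  have hcons : ∀ (n m : ℕ) (h : n ≤ m), (μn m).map (π n m h) = μn n := by
    intro n m h
    rw [← hproj m, Measure.map_map (hπmeas n m h) (hcoord m)]
    have : (π n m h ∘ fun x : ProjLim X π => x.1 m) = fun x : ProjLim X π => x.1 n :=
      funext fun x => x.2 n m h
    rw [this, hproj n]
  have hν : ∀ n, (μ.map F).map (fun x : ProjLim X π => x.1 n) = μn n := by
    intro n
    rw [Measure.map_map (hcoord n) hFmeas]
    by_cases hn : n ≤ k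
    · have : ((fun x : ProjLim X π => x.1 n) ∘ F)
          = (π n k hn ∘ fun y => φ • y) ∘ fun x : ProjLim X π => x.1 k := by
        funext x
        simp only [hF, Function.comp_apply, limAct, dif_pos hn]
      rw [this, ← Measure.map_map ((hπmeas n k hn).comp (hActMeas k φ)) (hcoord k), hproj k,
        ← Measure.map_map (hπmeas n k hn) (hActMeas k φ), hmapinv, hcons n k hn]
    · have hkn : k ≤ n := (not_le.mp hn).le
      have : ((fun x : ProjLim X π => x.1 n) ∘ F)
          = (fun y => (η k n hkn φ) • y) ∘ fun x : ProjLim X π => x.1 n := by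
        funext x
        simp only [hF, Function.comp_apply, limAct, dif_neg hn]
      rw [this, ← Measure.map_map (hActMeas n _) (hcoord n), hproj n, hmapinv]
  haveI : IsProbabilityMeasure (μ.map F) := Measure.isProbabilityMeasure_map hFmeas.aemeasurable
  have hEq : μ.map F = μ := huniq (μ.map F) this hν
  refine ⟨F, fun x => rfl, hFmeas, fun A hA => ?_⟩
  rw [← Measure.map_apply hFmeas hA, hEq]
end

section
/- Let X be a Polish space with a nondecreasing open exhaustion (X_n). The restriction map g : M(X) → Π_n M(X_n), g(μ)_n = π_n μ, is well defined (π_n μ ∈ M(X_n) for μ ∈ M(X)), is injective, and its image is exactly the consistency set M_ℕ := {(ξ_n)_n ∈ Π_n M(X_n) : ξ_n = π_{mn} ξ_m for all n ≤ m}; moreover its inverse on M_ℕ is the map h given by h((ξ_n)_n)(A) = sup_n ξ_n(ι_n⁻¹(A)) for Borel A ⊆ X. -/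
open MeasureTheory Set
open scoped ENNReal

/-- `ξ` is a locally finite simple counting measure: every point has an open neighborhood
of finite measure, `ξ` takes values in `ℕ ∪ {∞}` on Borel sets, and `ξ({y}) ≤ 1`. -/
def IsLFSC {Y : Type*} [TopologicalSpace Y] [MeasurableSpace Y]
    (ξ : Measure Y) : Prop :=
  (∀ y : Y, ∃ U : Set Y, IsOpen U ∧ y ∈ U ∧ ξ U < ⊤) ∧
  (∀ A : Set Y, MeasurableSet A → (∃ k : ℕ, ξ A = k) ∨ ξ A = ⊤) ∧
  (∀ y : Y, ξ {y} ≤ 1)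

/-- A supremum of values in `ℕ ∪ {∞}` lies in `ℕ ∪ {∞}`. -/
lemma iSup_nat_or_top {c : ℕ → ℝ≥0∞} (hc : ∀ n, (∃ k : ℕ, c n = k) ∨ c n = ⊤) :
    (∃ k : ℕ, (⨆ n, c n) = k) ∨ (⨆ n, c n) = ⊤ := by
  by_cases htop : (⨆ n, c n) = ⊤
  · exact Or.inr htop
  left
  have hfin : ∀ n, ∃ k : ℕ, c n = k := by
    intro n
    rcases hc n with h | h
    · exact h
    · exact absurd (top_unique (h ▸ le_iSup c n)) htop
  choose f hf using hfin
  obtain ⟨N, hN⟩ := ENNReal.exists_nat_gt htop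
  have hbdd : ∀ n, f n ≤ N := by
    intro n
    have h1 : c n < (N : ℝ≥0∞) := lt_of_le_of_lt (le_iSup c n) hN
    rw [hf n] at h1
    exact_mod_cast h1.le
  have hne : (Set.range f).Nonempty := ⟨f 0, ⟨0, rfl⟩⟩
  have hbd : BddAbove (Set.range f) := ⟨N, by rintro _ ⟨n, rfl⟩; exact hbdd n⟩
  have hmem := Nat.sSup_mem hne hbd
  obtain ⟨n0, hn0⟩ := hmem
  refine ⟨sSup (Set.range f), le_antisymm (iSup_le fun n => ?_) ?_⟩
  · rw [hf n]
    exact_mod_cast le_csSup hbd ⟨n, rfl⟩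
  · rw [← hn0, ← hf n0]
    exact le_iSup c n0

/-- Monotone convergence for `tsum` in `ℝ≥0∞`. -/
lemma tsum_iSup_mono {g : ℕ → ℕ → ℝ≥0∞} (hg : ∀ i, Monotone fun n => g n i) :
    ∑' i, ⨆ n, g n i = ⨆ n, ∑' i, g n i := by
  refine le_antisymm ?_ (iSup_le fun n => ENNReal.tsum_le_tsum fun i => le_iSup (fun m => g m i) n)
  rw [ENNReal.tsum_eq_iSup_sum]
  refine iSup_le fun s => ?_
  rw [ENNReal.finsetSum_iSup_of_monotone hg]
  exact iSup_mono fun n => ENNReal.sum_le_tsum s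

/-- the restriction map `g : M(X) → Π_n M(X_n)`, `g(ξ)_n = π_n ξ`
(realized by `Measure.comap Subtype.val`, which indeed satisfies
`(π_n ξ)(A) = ξ(ι_n(A))`), is well defined, injective, has image exactly the
consistency set `M_ℕ`, and its inverse on `M_ℕ` is
`h((ξ_n)_n)(A) = sup_n ξ_n(ι_n⁻¹(A))`. -/
theorem restriction_map_bijects_onto_consistency_set
    (X : Type*) [TopologicalSpace X] [PolishSpace X]
    [MeasurableSpace X] [BorelSpace X]
    (S : ℕ → Set X) (hopen : ∀ n, IsOpen (S n)) (hmono : Monotone S)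
    (hexh : ⋃ n, S n = Set.univ) :
    -- the map `g` is given by the value formula `(π_n ξ)(A) = ξ(ι_n(A))`
    (∀ ξ : Measure X, IsLFSC ξ → ∀ (n : ℕ) (A : Set (S n)), MeasurableSet A →
      Measure.comap (Subtype.val : S n → X) ξ A = ξ (Subtype.val '' A)) ∧
    -- likewise for the projections `π_{mn}` defining the consistency set
    (∀ (n m : ℕ) (h : n ≤ m) (ζ : Measure (S m)), IsLFSC ζ →
      ∀ A : Set (S n), MeasurableSet A →
        Measure.comap (Set.inclusion (hmono h)) ζ A = ζ (Set.inclusion (hmono h) '' A)) ∧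
    -- well-definedness: `π_n ξ ∈ M(X_n)` for `ξ ∈ M(X)`
    (∀ ξ : Measure X, IsLFSC ξ → ∀ n : ℕ,
      IsLFSC (Measure.comap (Subtype.val : S n → X) ξ)) ∧
    -- injectivity of `g`
    (∀ ξ ζ : Measure X, IsLFSC ξ → IsLFSC ζ →
      (∀ n : ℕ, Measure.comap (Subtype.val : S n → X) ξ
        = Measure.comap (Subtype.val : S n → X) ζ) → ξ = ζ) ∧
    -- the image of `g` is exactly the consistency set `M_ℕ`
    (∀ ξs : ∀ n, Measure (S n), (∀ n, IsLFSC (ξs n)) →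
      ((∃ ξ : Measure X, IsLFSC ξ ∧
          ∀ n : ℕ, Measure.comap (Subtype.val : S n → X) ξ = ξs n) ↔
        (∀ (n m : ℕ) (h : n ≤ m),
          ξs n = Measure.comap (Set.inclusion (hmono h)) (ξs m)))) ∧
    -- the inverse on `M_ℕ` is the map `h`
    (∀ ξ : Measure X, IsLFSC ξ → ∀ A : Set X, MeasurableSet A →
      ξ A = ⨆ n, Measure.comap (Subtype.val : S n → X) ξ
        ((Subtype.val : S n → X) ⁻¹' A)) := by
  -- basic measurability facts
  have hSm : ∀ n, MeasurableSet (S n) := fun n => (hopen n).measurableSet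
  have embS : ∀ n, MeasurableEmbedding (Subtype.val : S n → X) := fun n =>
    MeasurableEmbedding.subtype_coe (hSm n)
  have embI : ∀ {n m : ℕ} (h : n ≤ m), MeasurableEmbedding (Set.inclusion (hmono h)) := by
    intro n m h
    exact { injective := Set.inclusion_injective (hmono h)
            measurable := measurable_inclusion (hmono h)
            measurableSet_image' := fun u hu =>
              MeasurableSet.image_inclusion (hmono h) (hSm n) hu }
  -- the "sup reconstruction" formula, proved once
  have hsup : ∀ ξ : Measure X, ∀ A : Set X,
      ξ A = ⨆ n, Measure.comap (Subtype.val : S n → X) ξ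
        ((Subtype.val : S n → X) ⁻¹' A) := by
    intro ξ A
    have h1 : ∀ n, Measure.comap (Subtype.val : S n → X) ξ
        ((Subtype.val : S n → X) ⁻¹' A) = ξ (A ∩ S n) := by
      intro n
      rw [(embS n).comap_apply, Subtype.image_preimage_coe, inter_comm]
    have h2 : (⋃ n, A ∩ S n) = A := by
      rw [← inter_iUnion, hexh, inter_univ]
    have hdir : Monotone fun n => A ∩ S n := fun n m h => inter_subset_inter_right _ (hmono h)
    calc ξ A = ξ (⋃ n, A ∩ S n) := by rw [h2]
    _ = ⨆ n, ξ (A ∩ S n) := hdir.directed_le.measure_iUnion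
    _ = _ := by simp_rw [h1]
  refine ⟨fun ξ _ n A _ => (embS n).comap_apply ξ A,
    fun n m h ζ _ A _ => (embI h).comap_apply ζ A, ?_, ?_, ?_, fun ξ _ A _ => hsup ξ A⟩
  · -- well-definedness
    intro ξ hξ n
    refine ⟨?_, ?_, ?_⟩
    · intro y
      obtain ⟨U, hUo, hyU, hUf⟩ := hξ.1 y.1
      refine ⟨Subtype.val ⁻¹' U, hUo.preimage continuous_subtype_val, hyU, ?_⟩
      rw [(embS n).comap_apply, Subtype.image_preimage_coe]
      exact lt_of_le_of_lt (measure_mono inter_subset_right) hUf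
    · intro A hA
      rw [(embS n).comap_apply]
      exact hξ.2.1 _ ((embS n).measurableSet_image' hA)
    · intro y
      rw [(embS n).comap_apply, image_singleton]
      exact hξ.2.2 y.1
  · -- injectivity
    intro ξ ζ _ _ hcomap
    ext A hA
    rw [hsup ξ A, hsup ζ A]
    simp_rw [hcomap]
  · -- image characterization
    intro ξs hLF
    constructor
    · -- existence implies consistency
      rintro ⟨ξ, _, hg⟩ n m h
      ext A hA
      rw [← hg n, ← hg m, (embS n).comap_apply, (embI h).comap_apply, (embS m).comap_apply]
      congr 1
      rw [Set.image_image]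
    · -- consistency implies existence
      intro hcons
      -- monotonicity of n ↦ ξs n (val ⁻¹' A)
      have hmono' : ∀ A : Set X, Monotone fun n => ξs n ((Subtype.val : S n → X) ⁻¹' A) := by
        intro A n m h
        dsimp only
        have h1 : ξs n ((Subtype.val : S n → X) ⁻¹' A)
            = ξs m (Set.inclusion (hmono h) '' ((Subtype.val : S n → X) ⁻¹' A)) := by
          rw [hcons n m h, (embI h).comap_apply]
        rw [h1]
        refine measure_mono ?_
        rintro x ⟨y, hy, rfl⟩
        exact hy
      -- compatibility: on sets inside `S n`, all later `ξs m` agree with `ξs n`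
      have hcompat : ∀ (n m : ℕ) (h : n ≤ m) (B : Set X), B ⊆ S n →
          ξs m ((Subtype.val : S m → X) ⁻¹' B) = ξs n ((Subtype.val : S n → X) ⁻¹' B) := by
        intro n m h B hB
        have himg : Set.inclusion (hmono h) '' ((Subtype.val : S n → X) ⁻¹' B)
            = (Subtype.val : S m → X) ⁻¹' B := by
          ext x
          constructor
          · rintro ⟨y, hy, rfl⟩; exact hy
          · intro hx
            exact ⟨⟨x.1, hB hx⟩, hx, rfl⟩
        rw [hcons n m h, (embI h).comap_apply, himg]
      -- construct the measure
      set mfun : Set X → ℝ≥0∞ := fun A => ⨆ n, ξs n ((Subtype.val : S n → X) ⁻¹' A) with hmfun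
      have hm0 : mfun ∅ = 0 := by simp [hmfun]
      have hmU : ∀ (f : ℕ → Set X), (∀ i, MeasurableSet (f i)) →
          Pairwise (Function.onFun Disjoint f) → mfun (⋃ i, f i) = ∑' i, mfun (f i) := by
        intro f hf hd
        have : ∀ n, ξs n ((Subtype.val : S n → X) ⁻¹' ⋃ i, f i)
            = ∑' i, ξs n ((Subtype.val : S n → X) ⁻¹' f i) := by
          intro n
          rw [preimage_iUnion]
          exact measure_iUnion
            (fun i j hij => Disjoint.preimage _ (hd hij))
            (fun i => (hf i).preimage measurable_subtype_coe)
        simp only [hmfun, this]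
        exact (tsum_iSup_mono fun i => fun n m h => hmono' (f i) h).symm
      set ξ : Measure X := Measure.ofMeasurable (fun A _ => mfun A) hm0
        (fun f hf hd => hmU f hf hd) with hξdef
      have hξapp : ∀ A : Set X, MeasurableSet A → ξ A = mfun A := fun A hA =>
        Measure.ofMeasurable_apply A hA
      -- value on subsets of `S n`
      have hξB : ∀ (n : ℕ) (B : Set X), MeasurableSet B → B ⊆ S n →
          ξ B = ξs n ((Subtype.val : S n → X) ⁻¹' B) := by
        intro n B hBm hBsub
        rw [hξapp B hBm, hmfun]
        refine le_antisymm (iSup_le fun m => ?_)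
          (le_iSup (fun m => ξs m ((Subtype.val : S m → X) ⁻¹' B)) n)
        rcases le_total m n with h | h
        · exact hmono' B h
        · exact le_of_eq (hcompat n m h B hBsub)
      refine ⟨ξ, ⟨?_, ?_, ?_⟩, ?_⟩
      · -- locally finite
        intro y
        have hy : y ∈ ⋃ n, S n := hexh ▸ mem_univ y
        obtain ⟨n, hn⟩ := mem_iUnion.1 hy
        obtain ⟨U, hUo, hyU, hUf⟩ := (hLF n).1 ⟨y, hn⟩
        refine ⟨Subtype.val '' U, (hopen n).isOpenMap_subtype_val U hUo, ⟨⟨y, hn⟩, hyU, rfl⟩, ?_⟩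
        rw [hξB n _ ((hopen n).isOpenMap_subtype_val U hUo).measurableSet
            (by rintro x ⟨z, _, rfl⟩; exact z.2),
          preimage_image_eq U Subtype.val_injective]
        exact hUf
      · -- integer valued
        intro A hA
        rw [hξapp A hA]
        exact iSup_nat_or_top fun n =>
          (hLF n).2.1 _ (hA.preimage measurable_subtype_coe)
      · -- simple
        intro y
        have hy : y ∈ ⋃ n, S n := hexh ▸ mem_univ y
        obtain ⟨n, hn⟩ := mem_iUnion.1 hy
        rw [hξB n {y} (measurableSet_singleton y) (by rintro x rfl; exact hn)]
        refine le_trans (measure_mono ?_) ((hLF n).2.2 ⟨y, hn⟩)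
        rintro x hx
        exact Subtype.ext hx
      · -- comap agrees
        intro n
        ext A hA
        rw [(embS n).comap_apply,
          hξB n _ ((embS n).measurableSet_image' hA) (by rintro _ ⟨z, _, rfl⟩; exact z.2),
          preimage_image_eq A Subtype.val_injective]
end

section
/- Let X be a Polish space with a nondecreasing open exhaustion (X_n), and equip M(X) and each M(X_n) with the σ-algebra generated by the evaluation maps ξ ↦ ξ(B) over Borel sets B. Then each restriction map π_n : M(X) → M(X_n) is measurable, and if μ and ν are probability measures on M(X) whose pushforwards under π_n agree for every n ≥ 1, then μ = ν. -/
open MeasureTheory Set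
open scoped ENNReal

/-- The space `M(Y)` of locally finite simple counting Borel measures on `Y`.  As a
subtype of `Measure Y` it carries the σ-algebra generated by the evaluation maps
`ξ ↦ ξ(B)` over Borel sets `B`. -/
abbrev Mspace (Y : Type*) [TopologicalSpace Y] [MeasurableSpace Y] : Type _ :=
  {ξ : Measure Y // IsLFSC ξ}

set_option linter.unusedSectionVars false

section aux

variable {Y Z : Type*} [TopologicalSpace Y] [MeasurableSpace Y]
  [TopologicalSpace Z] [MeasurableSpace Z] [MeasurableSingletonClass Z]

/-- Restricting a locally finite simple counting measure along a continuous
measurable embedding gives one on the source. -/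
noncomputable def Mrestr (f : Z → Y) (hc : Continuous f) (hf : MeasurableEmbedding f)
    (ξ : Mspace Y) : Mspace Z :=
  ⟨ξ.1.comap f, by
    obtain ⟨h1, h2, h3⟩ := ξ.2
    refine ⟨fun z => ?_, fun A hA => ?_, fun z => ?_⟩
    · obtain ⟨U, hU, hzU, hUf⟩ := h1 (f z)
      refine ⟨f ⁻¹' U, hU.preimage hc, hzU, ?_⟩
      rw [hf.comap_apply]
      exact lt_of_le_of_lt (measure_mono (image_preimage_subset f U)) hUf
    · rw [hf.comap_apply]
      exact h2 _ (hf.measurableSet_image' hA)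
    · rw [hf.comap_apply, image_singleton]
      exact h3 (f z)⟩

theorem Mrestr_apply (f : Z → Y) (hc : Continuous f) (hf : MeasurableEmbedding f)
    (ξ : Mspace Y) (A : Set Z) : (Mrestr f hc hf ξ).1 A = ξ.1 (f '' A) :=
  hf.comap_apply _ _

theorem Mrestr_measurable (f : Z → Y) (hc : Continuous f) (hf : MeasurableEmbedding f) :
    Measurable (Mrestr f hc hf) := by
  apply Measurable.subtype_mk
  apply Measure.measurable_of_measurable_coe
  intro s hs
  have : (fun ξ : Mspace Y => ξ.1.comap f s) = fun ξ : Mspace Y => ξ.1 (f '' s) := by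
    funext ξ; exact hf.comap_apply _ _
  rw [this]
  exact (Measure.measurable_coe (hf.measurableSet_image' hs)).comp measurable_subtype_coe

end aux


/-- each restriction map `π_n : M(X) → M(X_n)` (the map satisfying
`(π_n ξ)(A) = ξ(ι_n(A))`) is measurable, and two probability measures on `M(X)` with
the same pushforwards under all `π_n` coincide. -/
theorem restriction_maps_measurable_and_separating
    (X : Type*) [TopologicalSpace X] [PolishSpace X]
    [MeasurableSpace X] [BorelSpace X]
    (S : ℕ → Set X) (hopen : ∀ n, IsOpen (S n)) (hmono : Monotone S)
    (hexh : ⋃ n, S n = Set.univ) :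
    ∃ p : ∀ n : ℕ, Mspace X → Mspace (S n),
      (∀ (n : ℕ) (ξ : Mspace X) (A : Set (S n)), MeasurableSet A →
        (p n ξ).1 A = ξ.1 (Subtype.val '' A)) ∧
      (∀ n : ℕ, Measurable (p n)) ∧
      (∀ μ ν : Measure (Mspace X), IsProbabilityMeasure μ → IsProbabilityMeasure ν →
        (∀ n : ℕ, μ.map (p n) = ν.map (p n)) → μ = ν) := by
  have hSm : ∀ n, MeasurableSet (S n) := fun n => (hopen n).measurableSet
  have hemb : ∀ n, MeasurableEmbedding (Subtype.val : S n → X) :=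
    fun n => MeasurableEmbedding.subtype_coe (hSm n)
  set p : ∀ n : ℕ, Mspace X → Mspace (S n) :=
    fun n => Mrestr Subtype.val continuous_subtype_val (hemb n) with hpdef
  have hp : ∀ n, Measurable (p n) :=
    fun n => Mrestr_measurable _ continuous_subtype_val (hemb n)
  have happ : ∀ (n : ℕ) (ξ : Mspace X) (A : Set (S n)),
      (p n ξ).1 A = ξ.1 (Subtype.val '' A) :=
    fun n ξ A => Mrestr_apply _ _ _ _ _
  refine ⟨p, fun n ξ A _ => happ n ξ A, hp, ?_⟩
  -- factorization through inclusions
  have hqemb : ∀ {n m : ℕ} (h : n ≤ m),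
      MeasurableEmbedding (Set.inclusion (hmono h)) := by
    intro n m h
    exact ⟨Set.inclusion_injective (hmono h), measurable_inclusion (hmono h),
      fun u hu => MeasurableSet.image_inclusion (hmono h) (hSm n) hu⟩
  have hfact : ∀ {n m : ℕ} (h : n ≤ m),
      p n = (Mrestr (Set.inclusion (hmono h)) (continuous_inclusion (hmono h)) (hqemb h)) ∘ p m := by
    intro n m h
    funext ξ
    apply Subtype.ext
    apply Measure.ext
    intro s hs
    show (p n ξ).1 s = (Mrestr (Set.inclusion (hmono h)) (continuous_inclusion (hmono h))
      (hqemb h) (p m ξ)).1 s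
    rw [happ n ξ s, Mrestr_apply, happ m ξ]
    congr 1
    rw [← Set.image_comp]
    rfl
  -- the σ-algebras pulled back by the p n are monotone
  have hmonoC : ∀ {n m : ℕ}, n ≤ m →
      MeasurableSpace.comap (p n) inferInstance ≤ MeasurableSpace.comap (p m) inferInstance := by
    intro n m h
    rw [hfact h, ← MeasurableSpace.comap_comp]
    exact MeasurableSpace.comap_mono
      ((measurable_iff_comap_le).mp (Mrestr_measurable _ _ _))
  intro μ ν hμ hν hmn
  set C : Set (Set (Mspace X)) :=
    ⋃ n, {s | ∃ A, MeasurableSet A ∧ s = p n ⁻¹' A} with hC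
  have hmemC : ∀ {n : ℕ} {s : Set (Mspace X)},
      (∃ A, MeasurableSet A ∧ s = p n ⁻¹' A) → s ∈ C := by
    intro n s hs
    exact Set.mem_iUnion.2 ⟨n, hs⟩
  have hCiff : ∀ {s : Set (Mspace X)}, s ∈ C ↔ ∃ n A, MeasurableSet A ∧ s = p n ⁻¹' A := by
    intro s
    simp only [hC, Set.mem_iUnion, Set.mem_setOf_eq]
  have hCsub : ∀ s ∈ C, MeasurableSet s := by
    intro s hs
    obtain ⟨n, A, hA, rfl⟩ := hCiff.1 hs
    exact (hp n) hA
  -- π-system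
  have hpi : IsPiSystem C := by
    intro s hs t ht _
    obtain ⟨n, A, hA, rfl⟩ := hCiff.1 hs
    obtain ⟨m, B, hB, rfl⟩ := hCiff.1 ht
    have h1 : MeasurableSet[MeasurableSpace.comap (p (max n m)) inferInstance] (p n ⁻¹' A) :=
      hmonoC (le_max_left n m) _ ⟨A, hA, rfl⟩
    have h2 : MeasurableSet[MeasurableSpace.comap (p (max n m)) inferInstance] (p m ⁻¹' B) :=
      hmonoC (le_max_right n m) _ ⟨B, hB, rfl⟩
    obtain ⟨A', hA', hA'eq⟩ := h1
    obtain ⟨B', hB', hB'eq⟩ := h2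
    refine hmemC (n := max n m) ⟨A' ∩ B', hA'.inter hB', ?_⟩
    rw [Set.preimage_inter, hA'eq, hB'eq]
  -- generation
  have hgen : (inferInstance : MeasurableSpace (Mspace X)) = MeasurableSpace.generateFrom C := by
    refine le_antisymm ?_ (MeasurableSpace.generateFrom_le hCsub)
    -- show val : Mspace X → Measure X is generateFrom C-measurable
    rw [show (inferInstance : MeasurableSpace (Mspace X)) =
        MeasurableSpace.comap (Subtype.val : Mspace X → Measure X) inferInstance from rfl]
    rw [← measurable_iff_comap_le]
    apply @Measure.measurable_of_measurable_coe _ _ _ (MeasurableSpace.generateFrom C)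
    intro B hB
    have hpnmeas : ∀ n, Measurable[MeasurableSpace.generateFrom C] (p n) := by
      intro n D hD
      exact MeasurableSpace.measurableSet_generateFrom (hmemC ⟨D, hD, rfl⟩)
    have key : (fun ξ : Mspace X => ξ.1 B)
        = fun ξ : Mspace X => ⨆ n, (p n ξ).1 ((Subtype.val : S n → X) ⁻¹' B) := by
      funext ξ
      have h1 : ∀ n, (p n ξ).1 ((Subtype.val : S n → X) ⁻¹' B) = ξ.1 (B ∩ S n) := by
        intro n
        rw [happ n ξ, Subtype.image_preimage_coe, Set.inter_comm]
      have h2 : B = ⋃ n, B ∩ S n := by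
        rw [← Set.inter_iUnion, hexh, Set.inter_univ]
      have hdir : Directed (· ⊆ ·) (fun n => B ∩ S n) :=
        Monotone.directed_le (fun a b hab => Set.inter_subset_inter_right _ (hmono hab))
      have h3 : ξ.1 B = ⨆ n, ξ.1 (B ∩ S n) := by
        conv_lhs => rw [h2]
        exact hdir.measure_iUnion
      rw [h3]
      exact iSup_congr fun n => (h1 n).symm
    rw [key]
    exact Measurable.iSup fun n =>
      (Measure.measurable_coe (measurable_subtype_coe hB)).comp
        (measurable_subtype_coe.comp (hpnmeas n))
  -- conclude equality of the two probability measures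
  refine ext_of_generate_finite C hgen hpi ?_ ?_
  · intro s hs
    obtain ⟨n, A, hA, rfl⟩ := hCiff.1 hs
    have := congrArg (fun κ : Measure (Mspace (S n)) => κ A) (hmn n)
    simpa [Measure.map_apply (hp n) hA] using this
  · simp [hμ.measure_univ, hν.measure_univ]
end
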